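/- Let F = {C(o_i, r_i)}_{i ∈ I} be a countable family of closed spherical caps on S^3 ⊂ E^4 with radii r_i ∈ (0, π/2), whose interiors are pairwise disjoint, and which is unconditionally symmetric (for each i and each coordinate index m, the cap with center σ_m(o_i) and radius r_i belongs to F). Suppose F contains the four caps of radius π/4 centered at (±1/√2, ±1/√2, 0, 0), and F contains no cap of radius π/4 centered at any of the points (0, 0, ±1/√2, ±1/√2). Then every cap of F is contained in {x ∈ S^3 : ε⟨x, n⟩ > 0} for some sign ε ∈ {+1, -1} and some n ∈ {(1/√2, 1/√2, 0, 0), (1/√2, -1/√2, 0, 0), e_3, e_4}, i.e., every cap of F is separated by one of these four pairwise orthogonal greatspheres. -/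

import Mathlib

open scoped RealInnerProductSpace

/-- The point `(s/√2, t/√2, 0, 0)`-style center: `(1/√2)(s eᵢ + t eⱼ)` in `E⁴`. -/
noncomputable def twoTangentCenter (i j : Fin 4) (s t : ℝ) : EuclideanSpace ℝ (Fin 4) :=
  (Real.sqrt 2)⁻¹ •
    (s • EuclideanSpace.single i (1 : ℝ) + t • EuclideanSpace.single j (1 : ℝ))

/-!
A cap `C(o, r)` with `sin r < |⟪o, n⟫|` lies in an open hemisphere bounded by the greatsphere
with normal `n`: its points are within angle `r` of `o`, which is within angle `π/2 - r` of `±n`.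
So if `C(o, r)`, `o = (a, b, c, d)`, is separated by none of the four greatspheres, then
`|a| + |b| ≤ √2 sin r` and `|c|, |d| ≤ sin r`. This excludes the four given caps at
`(±1/√2, ±1/√2, 0, 0)`, so the interior of `C(o, r)` misses that of the given cap in the quadrant
of `(a, b)`; hence the centers are at angle at least `r + π/4`, i.e. `|a| + |b| ≤ cos r - sin r`.
With `a² + b² + c² + d² = 1` this forces `r = π/4`, `a = b = 0` and `c² = d² = 1/2`: a cap that
the family does not contain.
-/

open Real InnerProductGeometry

lemma exists_sign_mul_eq_abs (a : ℝ) : ∃ s : ℝ, (s = 1 ∨ s = -1) ∧ s * a = |a| := by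
  rcases abs_choice a with h | h
  · exact ⟨1, Or.inl rfl, by rw [h, one_mul]⟩
  · exact ⟨-1, Or.inr rfl, by rw [h, neg_one_mul]⟩

lemma eq_pi_div_four_of_sin_eq_cos {r : ℝ} (hr : r ∈ Set.Ioo (-(3 * π / 4)) (5 * π / 4))
    (h : sin r = cos r) : r = π / 4 := by
  have : sin (r - π / 4) = 0 := by
    rw [sin_sub, sin_pi_div_four, cos_pi_div_four, h, sub_self]
  rw [sin_eq_zero_iff_of_lt_of_lt (by linarith [hr.1]) (by linarith [hr.2])] at this
  linarith

lemma abs_add_abs_le_of_abs_add_le_of_abs_sub_le {a b M : ℝ} (h₁ : |a + b| ≤ M)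
    (h₂ : |a - b| ≤ M) : |a| + |b| ≤ M := by
  rw [abs_le] at h₁ h₂
  rcases abs_cases a with ⟨ha, -⟩ | ⟨ha, -⟩ <;> rcases abs_cases b with ⟨hb, -⟩ | ⟨hb, -⟩ <;>
    linarith

lemma eq_zero_and_sq_eq_half_of_abs_add_abs_le_sub {a b c d S C : ℝ}
    (hsum : a ^ 2 + b ^ 2 + c ^ 2 + d ^ 2 = 1) (hab : |a| + |b| ≤ C - S) (hc : |c| ≤ S)
    (hd : |d| ≤ S) (hS : 0 < S) (hSC : S ^ 2 + C ^ 2 = 1) :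
    a = 0 ∧ b = 0 ∧ S = C ∧ c ^ 2 = 1 / 2 ∧ d ^ 2 = 1 / 2 := by
  have hab2 : a ^ 2 + b ^ 2 ≤ (C - S) ^ 2 := by
    nlinarith [sq_abs a, sq_abs b, abs_nonneg a, abs_nonneg b]
  have hc2 : c ^ 2 ≤ S ^ 2 := by nlinarith [sq_abs c, abs_nonneg c]
  have hd2 : d ^ 2 ≤ S ^ 2 := by nlinarith [sq_abs d, abs_nonneg d]
  have hCS : C = S := by nlinarith [abs_nonneg a, abs_nonneg b]
  have ha : |a| = 0 := by linarith [abs_nonneg a, abs_nonneg b]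
  have hb : |b| = 0 := by linarith [abs_nonneg a, abs_nonneg b]
  rw [abs_eq_zero] at ha hb
  subst ha hb
  refine ⟨rfl, rfl, hCS.symm, ?_, ?_⟩ <;> nlinarith

lemma exists_sign_eq_inv_sqrt_two_mul {c : ℝ} (hc : c ^ 2 = 1 / 2) :
    ∃ s : ℝ, (s = 1 ∨ s = -1) ∧ c = (√2)⁻¹ * s := by
  obtain ⟨s, hs, hsc⟩ := exists_sign_mul_eq_abs c
  rw [← sqrt_sq_eq_abs, hc, one_div, sqrt_inv] at hsc
  refine ⟨s, hs, ?_⟩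
  rcases hs with rfl | rfl <;> linarith

lemma cos_add_pi_div_four (r : ℝ) : cos (r + π / 4) = (√2)⁻¹ * (cos r - sin r) := by
  rw [cos_add, cos_pi_div_four, sin_pi_div_four]
  field_simp
  rw [sq_sqrt zero_le_two]

section Caps

variable {E : Type*} [NormedAddCommGroup E] [InnerProductSpace ℝ E] {x y o n : E} {r : ℝ}

def IsCapSeparatedBy (o : E) (r : ℝ) (n : E) : Prop :=
  ∃ ε : ℝ, (ε = 1 ∨ ε = -1) ∧
    {x : E | ‖x‖ = 1 ∧ cos r ≤ ⟪x, o⟫} ⊆ {x : E | ‖x‖ = 1 ∧ 0 < ε * ⟪x, n⟫}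

lemma cos_le_inner_iff_angle_le (hx : ‖x‖ = 1) (hy : ‖y‖ = 1) (hr : r ∈ Set.Icc 0 π) :
    cos r ≤ ⟪x, y⟫ ↔ angle x y ≤ r := by
  rw [inner_eq_cos_angle_of_norm_eq_one hx hy]
  exact strictAntiOn_cos.le_iff_ge hr ⟨angle_nonneg x y, angle_le_pi x y⟩

lemma cos_lt_inner_iff_angle_lt (hx : ‖x‖ = 1) (hy : ‖y‖ = 1) (hr : r ∈ Set.Icc 0 π) :
    cos r < ⟪x, y⟫ ↔ angle x y < r := by
  rw [inner_eq_cos_angle_of_norm_eq_one hx hy]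
  exact strictAntiOn_cos.lt_iff_gt hr ⟨angle_nonneg x y, angle_le_pi x y⟩

lemma inner_pos_of_cos_le_inner_of_sin_lt_inner (ho : ‖o‖ = 1) (hn : ‖n‖ = 1) (hx : ‖x‖ = 1)
    (hr : r ∈ Set.Icc 0 (π / 2)) (hxo : cos r ≤ ⟪x, o⟫) (hon : sin r < ⟪o, n⟫) :
    0 < ⟪x, n⟫ := by
  obtain ⟨hr₀, hr₁⟩ := hr
  have hpi := pi_pos
  rw [cos_le_inner_iff_angle_le hx ho ⟨hr₀, by linarith⟩] at hxo
  rw [← cos_pi_div_two_sub, cos_lt_inner_iff_angle_lt ho hn ⟨by linarith, by linarith⟩] at hon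
  rw [← cos_pi_div_two, cos_lt_inner_iff_angle_lt hx hn ⟨by linarith, by linarith⟩]
  linarith [angle_le_angle_add_angle x o n]

lemma isCapSeparatedBy_of_sin_lt_abs_inner (ho : ‖o‖ = 1) (hn : ‖n‖ = 1)
    (hr : r ∈ Set.Icc 0 (π / 2)) (h : sin r < |⟪o, n⟫|) : IsCapSeparatedBy o r n := by
  obtain ⟨ε, hε, hεon⟩ := exists_sign_mul_eq_abs ⟪o, n⟫
  have hεn : ‖ε • n‖ = 1 := by rcases hε with rfl | rfl <;> simp [hn]
  refine ⟨ε, hε, fun x ⟨hx, hxo⟩ ↦ ⟨hx, ?_⟩⟩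
  rw [← real_inner_smul_right] at hεon ⊢
  exact inner_pos_of_cos_le_inner_of_sin_lt_inner ho hεn hx hr hxo (hεon ▸ h)

lemma exists_inner_eq_cos_of_inner_eq_cos_add {o₁ o₂ : E} (h₁ : ‖o₁‖ = 1) (h₂ : ‖o₂‖ = 1)
    {t u : ℝ} (h : ⟪o₁, o₂⟫ = cos (t + u)) (hsin : sin (t + u) ≠ 0) :
    ∃ x : E, ‖x‖ = 1 ∧ ⟪x, o₁⟫ = cos t ∧ ⟪x, o₂⟫ = cos u := by
  -- the point of the great circle through `o₁`, `o₂` at angle `t` from `o₁` and `u` from `o₂`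
  set x := (sin (t + u))⁻¹ • (sin u • o₁ + sin t • o₂)
  have h₁₁ : ⟪o₁, o₁⟫ = 1 := by simp [h₁]
  have h₂₂ : ⟪o₂, o₂⟫ = 1 := by simp [h₂]
  have h₂₁ : ⟪o₂, o₁⟫ = cos (t + u) := by rw [real_inner_comm, h]
  have hx₁ : ⟪x, o₁⟫ = cos t := by
    simp only [x, real_inner_smul_left, inner_add_left, h₁₁, h₂₁]
    field_simp
    rw [sin_add, cos_add]
    linear_combination (-sin u) * sin_sq_add_cos_sq t
  have hx₂ : ⟪x, o₂⟫ = cos u := by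
    simp only [x, real_inner_smul_left, inner_add_left, h₂₂, h]
    field_simp
    rw [sin_add, cos_add]
    linear_combination (-sin t) * sin_sq_add_cos_sq u
  have hxx : ⟪x, x⟫ = 1 := by
    change ⟪x, (sin (t + u))⁻¹ • (sin u • o₁ + sin t • o₂)⟫ = 1
    rw [real_inner_smul_right, inner_add_right, real_inner_smul_right, real_inner_smul_right,
      hx₁, hx₂]
    field_simp
    rw [sin_add]
    ring
  refine ⟨x, ?_, hx₁, hx₂⟩
  rwa [real_inner_self_eq_norm_sq, pow_eq_one_iff_of_nonneg (norm_nonneg x) two_ne_zero] at hxx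

lemma inner_le_cos_add_of_disjoint {o₁ o₂ : E} {r₁ r₂ : ℝ} (h₁ : ‖o₁‖ = 1) (h₂ : ‖o₂‖ = 1)
    (hr₁ : 0 < r₁) (hr₂ : 0 < r₂) (hr : r₁ + r₂ ≤ π)
    (hdisj : Disjoint {x : E | ‖x‖ = 1 ∧ cos r₁ < ⟪x, o₁⟫} {x : E | ‖x‖ = 1 ∧ cos r₂ < ⟪x, o₂⟫}) :
    ⟪o₁, o₂⟫ ≤ cos (r₁ + r₂) := by
  by_contra! h
  rw [cos_lt_inner_iff_angle_lt h₁ h₂ ⟨by linarith, hr⟩] at h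
  have hr₁' : r₁ ∈ Set.Icc 0 π := ⟨hr₁.le, by linarith⟩
  have hr₂' : r₂ ∈ Set.Icc 0 π := ⟨hr₂.le, by linarith⟩
  obtain ⟨x, hx, hx₁, hx₂⟩ : ∃ x : E, ‖x‖ = 1 ∧ cos r₁ < ⟪x, o₁⟫ ∧ cos r₂ < ⟪x, o₂⟫ := by
    rcases (angle_nonneg o₁ o₂).eq_or_lt with hθ | hθ
    · have hself : angle o₁ o₁ = 0 := angle_self (ne_zero_of_norm_ne_zero (h₁ ▸ one_ne_zero))
      exact ⟨o₁, h₁, (cos_lt_inner_iff_angle_lt h₁ h₁ hr₁').2 (hself ▸ hr₁),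
        (cos_lt_inner_iff_angle_lt h₁ h₂ hr₂').2 (hθ ▸ hr₂)⟩
    set θ := angle o₁ o₂
    set t := θ * r₁ / (r₁ + r₂)
    set u := θ * r₂ / (r₁ + r₂)
    have htu : t + u = θ := by simp only [t, u]; field_simp
    have ht : t < r₁ := by rw [div_lt_iff₀ (by positivity)]; nlinarith
    have hu : u < r₂ := by rw [div_lt_iff₀ (by positivity)]; nlinarith
    obtain ⟨x, hx, hx₁, hx₂⟩ := exists_inner_eq_cos_of_inner_eq_cos_add h₁ h₂
      (by rw [htu]; exact inner_eq_cos_angle_of_norm_eq_one h₁ h₂)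
      (by rw [htu]; exact (sin_pos_of_pos_of_lt_pi hθ (by linarith)).ne')
    refine ⟨x, hx, ?_, ?_⟩
    · rw [hx₁]; exact cos_lt_cos_of_nonneg_of_le_pi (by positivity) hr₁'.2 ht
    · rw [hx₂]; exact cos_lt_cos_of_nonneg_of_le_pi (by positivity) hr₂'.2 hu
  exact Set.disjoint_left.mp hdisj ⟨hx, hx₁⟩ ⟨hx, hx₂⟩

end Caps

lemma inner_twoTangentCenter (x : EuclideanSpace ℝ (Fin 4)) (i j : Fin 4) (s t : ℝ) :
    ⟪x, twoTangentCenter i j s t⟫ = (√2)⁻¹ * (s * x i + t * x j) := by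
  simp [twoTangentCenter, inner_add_right, real_inner_smul_right,
    EuclideanSpace.inner_single_right]
  ring

lemma norm_twoTangentCenter {i j : Fin 4} (hij : i ≠ j) {s t : ℝ} (hs : s = 1 ∨ s = -1)
    (ht : t = 1 ∨ t = -1) : ‖twoTangentCenter i j s t‖ = 1 := by
  rw [← pow_eq_one_iff_of_nonneg (norm_nonneg _) two_ne_zero, ← real_inner_self_eq_norm_sq,
    inner_twoTangentCenter]
  simp [twoTangentCenter, hij, hij.symm]
  rcases hs with rfl | rfl <;> rcases ht with rfl | rfl <;> field_simp <;> norm_num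

lemma abs_twoTangentCenter_apply_left {i j : Fin 4} (hij : i ≠ j) {s : ℝ} (hs : s = 1 ∨ s = -1)
    (t : ℝ) : |twoTangentCenter i j s t i| = (√2)⁻¹ := by
  rcases hs with rfl | rfl <;> simp [twoTangentCenter, hij.symm]

lemma abs_twoTangentCenter_apply_right {i j : Fin 4} (hij : i ≠ j) (s : ℝ) {t : ℝ}
    (ht : t = 1 ∨ t = -1) : |twoTangentCenter i j s t j| = (√2)⁻¹ := by
  rcases ht with rfl | rfl <;> simp [twoTangentCenter, hij]

lemma norm_sq_eq_sum_four (x : EuclideanSpace ℝ (Fin 4)) :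
    ‖x‖ ^ 2 = x 0 ^ 2 + x 1 ^ 2 + x 2 ^ 2 + x 3 ^ 2 := by
  simp [EuclideanSpace.norm_sq_eq, Fin.sum_univ_four]

def fourNormals : Set (EuclideanSpace ℝ (Fin 4)) :=
  {twoTangentCenter 0 1 1 1, twoTangentCenter 0 1 1 (-1),
    EuclideanSpace.single 2 (1 : ℝ), EuclideanSpace.single 3 (1 : ℝ)}

lemma norm_eq_one_of_mem_fourNormals {n : EuclideanSpace ℝ (Fin 4)} (hn : n ∈ fourNormals) :
    ‖n‖ = 1 := by
  rcases hn with rfl | rfl | rfl | rfl <;>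
    simp [norm_twoTangentCenter Fin.zero_ne_one, PiLp.norm_single]

lemma abs_coords_le_of_not_separated {o : EuclideanSpace ℝ (Fin 4)} {r : ℝ} (ho : ‖o‖ = 1)
    (hr : r ∈ Set.Icc 0 (π / 2))
    (h : ¬ ∃ n ∈ fourNormals, IsCapSeparatedBy o r n) :
    |o 0| + |o 1| ≤ √2 * sin r ∧ |o 2| ≤ sin r ∧ |o 3| ≤ sin r := by
  have hbound : ∀ n ∈ fourNormals, |⟪o, n⟫| ≤ sin r := fun n hn ↦ not_lt.1 fun hlt ↦
    h ⟨n, hn, isCapSeparatedBy_of_sin_lt_abs_inner ho (norm_eq_one_of_mem_fourNormals hn) hr hlt⟩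
  simp only [fourNormals, Set.forall_mem_insert, Set.mem_singleton_iff, forall_eq,
    inner_twoTangentCenter, EuclideanSpace.inner_single_right, one_mul, neg_one_mul,
    ← sub_eq_add_neg, conj_trivial, abs_mul, abs_inv, abs_of_nonneg (sqrt_nonneg 2),
    inv_mul_le_iff₀ (sqrt_pos.2 two_pos)] at hbound
  obtain ⟨hplus, hminus, hc, hd⟩ := hbound
  exact ⟨abs_add_abs_le_of_abs_add_le_of_abs_sub_le hplus hminus, hc, hd⟩

lemma eq_twoTangentCenter_of_abs_add_abs_le_cos_sub_sin {o : EuclideanSpace ℝ (Fin 4)} {r : ℝ}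
    (ho : ‖o‖ = 1) (hr : r ∈ Set.Ioo 0 (π / 2)) (hab : |o 0| + |o 1| ≤ cos r - sin r)
    (hc : |o 2| ≤ sin r) (hd : |o 3| ≤ sin r) :
    r = π / 4 ∧ ∃ s t : ℝ, (s = 1 ∨ s = -1) ∧ (t = 1 ∨ t = -1) ∧ o = twoTangentCenter 2 3 s t := by
  have hpi := pi_pos
  have hsum : o 0 ^ 2 + o 1 ^ 2 + o 2 ^ 2 + o 3 ^ 2 = 1 := by
    rw [← norm_sq_eq_sum_four, ho, one_pow]
  obtain ⟨ha, hb, hsc, hc2, hd2⟩ := eq_zero_and_sq_eq_half_of_abs_add_abs_le_sub hsum hab hc hd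
    (sin_pos_of_pos_of_lt_pi hr.1 (by linarith [hr.2])) (sin_sq_add_cos_sq r)
  obtain ⟨s, hs, hcs⟩ := exists_sign_eq_inv_sqrt_two_mul hc2
  obtain ⟨t, ht, hdt⟩ := exists_sign_eq_inv_sqrt_two_mul hd2
  refine ⟨eq_pi_div_four_of_sin_eq_cos ⟨by linarith [hr.1], by linarith [hr.2]⟩ hsc,
    s, t, hs, ht, ?_⟩
  ext m
  fin_cases m <;> simp [twoTangentCenter, ha, hb, hcs, hdt]

theorem four_twoTangent_caps_family_separated_general
    (I : Type)
    (o : I → EuclideanSpace ℝ (Fin 4)) (r : I → ℝ)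
    (ho : ∀ i, ‖o i‖ = 1) (hr : ∀ i, r i ∈ Set.Ioo 0 (Real.pi / 2))
    (hpack : ∀ i j, i ≠ j → Disjoint
      {x : EuclideanSpace ℝ (Fin 4) | ‖x‖ = 1 ∧ Real.cos (r i) < ⟪x, o i⟫}
      {x : EuclideanSpace ℝ (Fin 4) | ‖x‖ = 1 ∧ Real.cos (r j) < ⟪x, o j⟫})
    (hmem : ∀ s t : ℝ, (s = 1 ∨ s = -1) → (t = 1 ∨ t = -1) →
      ∃ i, o i = twoTangentCenter 0 1 s t ∧ r i = Real.pi / 4)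
    (hnot : ∀ s t : ℝ, (s = 1 ∨ s = -1) → (t = 1 ∨ t = -1) →
      ¬ ∃ i, o i = twoTangentCenter 2 3 s t ∧ r i = Real.pi / 4) :
    ∀ i, ∃ n ∈ ({twoTangentCenter 0 1 1 1, twoTangentCenter 0 1 1 (-1),
        EuclideanSpace.single 2 (1 : ℝ), EuclideanSpace.single 3 (1 : ℝ)} :
        Set (EuclideanSpace ℝ (Fin 4))), ∃ ε : ℝ, (ε = 1 ∨ ε = -1) ∧
      {x : EuclideanSpace ℝ (Fin 4) | ‖x‖ = 1 ∧ Real.cos (r i) ≤ ⟪x, o i⟫} ⊆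
        {x : EuclideanSpace ℝ (Fin 4) | ‖x‖ = 1 ∧ 0 < ε * ⟪x, n⟫} := by
  intro i
  by_contra hsep
  obtain ⟨hab, hc, hd⟩ :=
    abs_coords_le_of_not_separated (ho i) (Set.Ioo_subset_Icc_self (hr i)) hsep
  obtain ⟨s, hs, hsa⟩ := exists_sign_mul_eq_abs (o i 0)
  obtain ⟨t, ht, htb⟩ := exists_sign_mul_eq_abs (o i 1)
  obtain ⟨j, hoj, hrj⟩ := hmem s t hs ht
  have hij : i ≠ j := by
    rintro rfl
    rw [hoj, abs_twoTangentCenter_apply_left Fin.zero_ne_one hs,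
      abs_twoTangentCenter_apply_right Fin.zero_ne_one s ht, hrj, sin_pi_div_four] at hab
    field_simp at hab
    nlinarith [one_lt_sqrt_two, sq_sqrt (zero_le_two (α := ℝ))]
  have hfar := inner_le_cos_add_of_disjoint (ho i) (ho j) (hr i).1 (hr j).1
    (by linarith [(hr i).2, (hr j).2]) (hpack i j hij)
  rw [hoj, hrj, inner_twoTangentCenter, hsa, htb, cos_add_pi_div_four] at hfar
  obtain ⟨hr4, s', t', hs', ht', ho'⟩ := eq_twoTangentCenter_of_abs_add_abs_le_cos_sub_sin (ho i)
    (hr i) (le_of_mul_le_mul_left hfar (by positivity)) hc hd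
  exact hnot s' t' hs' ht' ⟨i, ho', hr4⟩

/-- Let `F` be a countable unconditionally symmetric packing of closed
spherical caps on `S³ ⊂ E⁴` containing the four caps of radius `π/4` centered at
`(±1/√2, ±1/√2, 0, 0)` and containing no cap of radius `π/4` centered at
`(0, 0, ±1/√2, ±1/√2)`. Then every cap of `F` is separated by one of the four pairwise
orthogonal greatspheres with normals `(1/√2, 1/√2, 0, 0)`, `(1/√2, -1/√2, 0, 0)`, `e₃`, `e₄`. -/
theorem four_twoTangent_caps_family_separated
    (I : Type) [Countable I]
    (o : I → EuclideanSpace ℝ (Fin 4)) (r : I → ℝ)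
    (ho : ∀ i, ‖o i‖ = 1) (hr : ∀ i, r i ∈ Set.Ioo 0 (Real.pi / 2))
    (hpack : ∀ i j, i ≠ j → Disjoint
      {x : EuclideanSpace ℝ (Fin 4) | ‖x‖ = 1 ∧ Real.cos (r i) < ⟪x, o i⟫}
      {x : EuclideanSpace ℝ (Fin 4) | ‖x‖ = 1 ∧ Real.cos (r j) < ⟪x, o j⟫})
    (hsym : ∀ i, ∀ m : Fin 4, ∃ j,
      o j = o i - (2 * o i m) • EuclideanSpace.single m (1 : ℝ) ∧ r j = r i)
    (hmem : ∀ s t : ℝ, (s = 1 ∨ s = -1) → (t = 1 ∨ t = -1) →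
      ∃ i, o i = twoTangentCenter 0 1 s t ∧ r i = Real.pi / 4)
    (hnot : ∀ s t : ℝ, (s = 1 ∨ s = -1) → (t = 1 ∨ t = -1) →
      ¬ ∃ i, o i = twoTangentCenter 2 3 s t ∧ r i = Real.pi / 4) :
    ∀ i, ∃ n ∈ ({twoTangentCenter 0 1 1 1, twoTangentCenter 0 1 1 (-1),
        EuclideanSpace.single 2 (1 : ℝ), EuclideanSpace.single 3 (1 : ℝ)} :
        Set (EuclideanSpace ℝ (Fin 4))), ∃ ε : ℝ, (ε = 1 ∨ ε = -1) ∧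
      {x : EuclideanSpace ℝ (Fin 4) | ‖x‖ = 1 ∧ Real.cos (r i) ≤ ⟪x, o i⟫} ⊆
        {x : EuclideanSpace ℝ (Fin 4) | ‖x‖ = 1 ∧ 0 < ε * ⟪x, n⟫} :=
  four_twoTangent_caps_family_separated_general I o r ho hr hpack hmem hnot
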